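/- Let ℓ : ℝ^d × U → ℝ satisfy the Hölder condition |ℓ(θ,u) − ℓ(θ',u)| ≤ J(u)(‖θ−θ'‖^α + ‖θ−θ'‖^β) with 0 ≤ α ≤ 1 ≤ β and let ℓ̄_γ(θ,u) = ∫ ℓ(x,u) φ_{d,γ}(x−θ) dx be the Gaussian smoothing. Then there is a constant C < ∞ (depending only on d and β) such that for all θ ∈ ℝ^d, u, and γ ∈ (0,1]: ‖∇_θ ℓ̄_γ(θ,u)‖ ≤ C J(u) γ^{(α−1)/2}. -/

import Mathlib

/-!
Differentiating under the integral sign, `∇ℓ̄_γ(θ) = γ⁻¹ ∫ ℓ(x) (x - θ) φ_γ(x - θ) dx`; this is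
justified because for `‖θ' - θ‖ ≤ 1` one has `φ_γ(x - θ') ≤ 2^{d/2} e^{1/(2γ)} φ_{2γ}(x - θ)`.
The Gaussian has the same mass at every centre, so `∫ (x - θ) φ_γ(x - θ) dx = 0` and `ℓ(x)` may be
replaced by `ℓ(x) - ℓ(θ)`. The Hölder bound then gives
`‖∇ℓ̄_γ(θ)‖ ≤ J γ⁻¹ (m_{α+1}(γ) + m_{β+1}(γ))` with `m_p(γ) = ∫ ‖w‖^p φ_γ(w) dw = γ^{p/2} m_p(1)`,
and `γ^{(β-1)/2} ≤ γ^{(α-1)/2}` for `γ ≤ 1`.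
-/

open MeasureTheory Real

/-- Density of the `d`-dimensional centered Gaussian distribution with covariance `γ • I`. -/
noncomputable def gaussDensity (d : ℕ) (γ : ℝ) (z : EuclideanSpace ℝ (Fin d)) : ℝ :=
  (2 * π * γ) ^ (-(d : ℝ) / 2) * Real.exp (-‖z‖ ^ 2 / (2 * γ))

/-- Gaussian smoothing of `ℓ(·,u)` at scale `γ`. -/
noncomputable def gaussSmooth {d : ℕ} {U : Type*} (ℓ : EuclideanSpace ℝ (Fin d) → U → ℝ)
    (γ : ℝ) (θ : EuclideanSpace ℝ (Fin d)) (u : U) : ℝ :=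
  ∫ x, ℓ x u * gaussDensity d γ (x - θ)

lemma Real.one_add_rpow_le {t p : ℝ} (ht : 0 ≤ t) (hp : 0 ≤ p) :
    (1 + t) ^ p ≤ 2 ^ p * (1 + t ^ p) := calc
  (1 + t) ^ p ≤ (2 * max 1 t) ^ p := by
    gcongr; rw [two_mul]; gcongr <;> simp
  _ = 2 ^ p * max 1 (t ^ p) := by
    rw [Real.mul_rpow zero_le_two (by positivity), Real.rpow_max zero_le_one ht hp,
      Real.one_rpow]
  _ ≤ 2 ^ p * (1 + t ^ p) := by
    gcongr; exact max_le_add_of_nonneg zero_le_one (by positivity)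

section Radial

variable {E : Type*} [NormedAddCommGroup E] [NormedSpace ℝ E] [FiniteDimensional ℝ E]
  [MeasurableSpace E] [BorelSpace E] (μ : Measure E) [μ.IsAddHaarMeasure]

theorem integrable_norm_rpow_mul_exp_neg_mul_sq {b p : ℝ} (hb : 0 < b) (hp : -1 < p) :
    Integrable (fun x : E => ‖x‖ ^ p * rexp (-b * ‖x‖ ^ 2)) μ := by
  rcases subsingleton_or_nontrivial E with hE | hE
  · exact Integrable.of_finite
  rw [integrable_fun_norm_addHaar μ (f := fun y => y ^ p * rexp (-b * y ^ 2))]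
  refine (integrableOn_rpow_mul_exp_neg_mul_sq hb (s := (Module.finrank ℝ E - 1 : ℕ) + p)
    (by linarith [(Nat.cast_nonneg _ : (0 : ℝ) ≤ (Module.finrank ℝ E - 1 : ℕ))])).congr_fun
    (fun y (hy : 0 < y) => ?_) measurableSet_Ioi
  simp only [Real.rpow_add hy, Real.rpow_natCast, smul_eq_mul, mul_assoc]

end Radial

section GaussDensity

variable {d : ℕ} {γ : ℝ}

local notation "E" => EuclideanSpace ℝ (Fin d)

lemma gaussDensity_eq_mul_exp (z : E) :
    gaussDensity d γ z = (2 * π * γ) ^ (-(d : ℝ) / 2) * rexp (-(2 * γ)⁻¹ * ‖z‖ ^ 2) := by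
  rw [gaussDensity]; congr 2; ring

lemma gaussDensity_pos (hγ : 0 < γ) (z : E) : 0 < gaussDensity d γ z := by
  rw [gaussDensity]; positivity

@[fun_prop]
lemma continuous_gaussDensity : Continuous (gaussDensity d γ) := by
  unfold gaussDensity; fun_prop

lemma integrable_norm_rpow_mul_gaussDensity (hγ : 0 < γ) {p : ℝ} (hp : -1 < p) :
    Integrable (fun z : E => ‖z‖ ^ p * gaussDensity d γ z) := by
  refine ((integrable_norm_rpow_mul_exp_neg_mul_sq volume (b := (2 * γ)⁻¹) (by positivity)
    hp).const_mul ((2 * π * γ) ^ (-(d : ℝ) / 2))).congr (.of_forall fun z => ?_)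
  simp only [gaussDensity_eq_mul_exp]
  ring

lemma integrable_one_add_norm_rpow_mul_gaussDensity (hγ : 0 < γ) {p : ℝ} (hp : 0 ≤ p) :
    Integrable (fun z : E => (1 + ‖z‖) ^ p * gaussDensity d γ z) := by
  have h0 : Integrable (gaussDensity d γ) := by
    simpa using integrable_norm_rpow_mul_gaussDensity (d := d) hγ (p := 0) (by norm_num)
  have hdom := (h0.add (integrable_norm_rpow_mul_gaussDensity hγ (by linarith : -1 < p))).const_mul
    (2 ^ p)
  refine hdom.mono' (by fun_prop) (.of_forall fun z => ?_)
  have hG := (gaussDensity_pos hγ z).le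
  show _ ≤ 2 ^ p * (gaussDensity d γ z + ‖z‖ ^ p * gaussDensity d γ z)
  rw [Real.norm_of_nonneg (by positivity), ← one_add_mul, ← mul_assoc]
  exact mul_le_mul_of_nonneg_right (Real.one_add_rpow_le (norm_nonneg z) hp) hG

lemma gaussDensity_sub_le (w : E) {v : E} (hv : ‖v‖ ≤ 1) (hγ : 0 < γ) :
    gaussDensity d γ (w - v) ≤ 2 ^ ((d : ℝ) / 2) * rexp (2 * γ)⁻¹ * gaussDensity d (2 * γ) w := by
  have hw : ‖w‖ ≤ ‖w - v‖ + 1 := by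
    calc ‖w‖ = ‖(w - v) + v‖ := by rw [sub_add_cancel]
      _ ≤ ‖w - v‖ + 1 := (norm_add_le _ _).trans (by gcongr)
  have hexp : -(2 * γ)⁻¹ * ‖w - v‖ ^ 2 ≤ (2 * γ)⁻¹ + -(2 * (2 * γ))⁻¹ * ‖w‖ ^ 2 := by
    have : ‖w‖ ^ 2 ≤ 2 * ‖w - v‖ ^ 2 + 2 := by
      nlinarith [sq_nonneg (‖w - v‖ - 1), mul_le_mul hw hw (norm_nonneg w) (by positivity)]
    field_simp
    linarith
  have hK : (2 * π * (2 * γ)) ^ (-(d : ℝ) / 2)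
      = (2 ^ ((d : ℝ) / 2))⁻¹ * (2 * π * γ) ^ (-(d : ℝ) / 2) := by
    rw [show 2 * π * (2 * γ) = 2 * (2 * π * γ) by ring, Real.mul_rpow zero_le_two (by positivity),
      neg_div, Real.rpow_neg zero_le_two]
  rw [gaussDensity_eq_mul_exp, gaussDensity_eq_mul_exp, hK]
  calc (2 * π * γ) ^ (-(d : ℝ) / 2) * rexp (-(2 * γ)⁻¹ * ‖w - v‖ ^ 2)
      ≤ (2 * π * γ) ^ (-(d : ℝ) / 2) * rexp ((2 * γ)⁻¹ + -(2 * (2 * γ))⁻¹ * ‖w‖ ^ 2) := by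
        gcongr
    _ = _ := by
        have h2 : (2 : ℝ) ^ ((d : ℝ) / 2) ≠ 0 := by positivity
        rw [Real.exp_add]
        field_simp

lemma gaussDensity_sqrt_smul (hγ : 0 < γ) (y : E) :
    gaussDensity d γ (√γ • y) = γ ^ (-(d : ℝ) / 2) * gaussDensity d 1 y := by
  have hexp : -‖√γ • y‖ ^ 2 / (2 * γ) = -‖y‖ ^ 2 / (2 * 1) := by
    rw [norm_smul, Real.norm_of_nonneg (Real.sqrt_nonneg γ), mul_pow, Real.sq_sqrt hγ.le]
    field_simp
  rw [gaussDensity, gaussDensity, hexp, mul_one, mul_one, Real.mul_rpow (by positivity) hγ.le]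
  ring

theorem integral_norm_rpow_mul_gaussDensity (hγ : 0 < γ) (p : ℝ) :
    ∫ z : E, ‖z‖ ^ p * gaussDensity d γ z =
      γ ^ (p / 2) * ∫ z : E, ‖z‖ ^ p * gaussDensity d 1 z := by
  have h := Measure.integral_comp_smul_of_nonneg volume
    (fun z : E => ‖z‖ ^ p * gaussDensity d γ z) √γ (hR := Real.sqrt_nonneg γ)
  have hpoint : ∀ y : E, ‖√γ • y‖ ^ p * gaussDensity d γ (√γ • y)
      = γ ^ (p / 2) * γ ^ (-(d : ℝ) / 2) * (‖y‖ ^ p * gaussDensity d 1 y) := fun y => by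
    rw [gaussDensity_sqrt_smul hγ, norm_smul, Real.norm_of_nonneg (Real.sqrt_nonneg γ),
      Real.mul_rpow (Real.sqrt_nonneg γ) (norm_nonneg y), Real.sqrt_eq_rpow,
      ← Real.rpow_mul hγ.le]
    ring_nf
  simp only [hpoint, integral_const_mul, finrank_euclideanSpace_fin, smul_eq_mul] at h
  have hd : (√γ ^ d)⁻¹ = γ ^ (-(d : ℝ) / 2) := by
    rw [Real.sqrt_eq_rpow, ← Real.rpow_natCast, ← Real.rpow_mul hγ.le, ← Real.rpow_neg hγ.le]
    ring_nf
  rw [hd] at h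
  have hne : γ ^ (-(d : ℝ) / 2) ≠ 0 := (Real.rpow_pos_of_pos hγ _).ne'
  apply mul_left_cancel₀ hne
  rw [← h]
  ring

end GaussDensity

noncomputable def shiftDerivGaussDensity (d : ℕ) (γ : ℝ) (w : EuclideanSpace ℝ (Fin d)) :
    EuclideanSpace ℝ (Fin d) →L[ℝ] ℝ :=
  (γ⁻¹ * gaussDensity d γ w) • innerSL ℝ w

section Smoothing

variable {d : ℕ} {γ : ℝ}

local notation "E" => EuclideanSpace ℝ (Fin d)

lemma hasFDerivAt_gaussDensity_sub (x θ : E) :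
    HasFDerivAt (fun θ' => gaussDensity d γ (x - θ')) (shiftDerivGaussDensity d γ (x - θ)) θ := by
  have h := ((((hasFDerivAt_id θ).const_sub x).norm_sq.const_mul (-(2 * γ)⁻¹)).exp).const_mul
    ((2 * π * γ) ^ (-(d : ℝ) / 2))
  simp_rw [← gaussDensity_eq_mul_exp] at h
  refine h.congr_fderiv (ContinuousLinearMap.ext fun v => ?_)
  simp only [shiftDerivGaussDensity, gaussDensity_eq_mul_exp, FunLike.coe_smul,
    Pi.smul_apply, innerSL_apply_apply, ContinuousLinearMap.comp_apply,
    FunLike.coe_neg, Pi.neg_apply, ContinuousLinearMap.id_apply, id_eq,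
    inner_neg_right, smul_eq_mul]
  ring

lemma norm_shiftDerivGaussDensity (hγ : 0 < γ) (w : E) :
    ‖shiftDerivGaussDensity d γ w‖ = γ⁻¹ * gaussDensity d γ w * ‖w‖ := by
  rw [shiftDerivGaussDensity, norm_smul, innerSL_apply_norm,
    Real.norm_of_nonneg (by have := gaussDensity_pos hγ w; positivity)]

@[fun_prop]
lemma continuous_shiftDerivGaussDensity : Continuous (shiftDerivGaussDensity d γ) := by
  unfold shiftDerivGaussDensity; fun_prop

lemma norm_smul_shiftDerivGaussDensity_sub_le (hγ : 0 < γ) {h : E → ℝ} {A q : ℝ} {θ θ' : E}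
    (hA : ∀ x, |h x| ≤ A * (1 + ‖x - θ‖) ^ q) (hθ' : θ' ∈ Metric.closedBall θ 1) (x : E) :
    ‖h x • shiftDerivGaussDensity d γ (x - θ')‖ ≤ A * γ⁻¹ * (2 ^ ((d : ℝ) / 2) * rexp (2 * γ)⁻¹) *
      ((1 + ‖x - θ‖) ^ (q + 1) * gaussDensity d (2 * γ) (x - θ)) := by
  have hdist : ‖θ' - θ‖ ≤ 1 := by rwa [← dist_eq_norm]
  have hnorm : ‖x - θ'‖ ≤ 1 + ‖x - θ‖ := by
    calc ‖x - θ'‖ = ‖(x - θ) - (θ' - θ)‖ := by congr 1; abel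
      _ ≤ ‖x - θ‖ + 1 := (norm_sub_le _ _).trans (by gcongr)
      _ = 1 + ‖x - θ‖ := add_comm _ _
  have hG : gaussDensity d γ (x - θ')
      ≤ 2 ^ ((d : ℝ) / 2) * rexp (2 * γ)⁻¹ * gaussDensity d (2 * γ) (x - θ) := by
    simpa [sub_sub_sub_cancel_right] using gaussDensity_sub_le (x - θ) hdist hγ
  have hA' : 0 ≤ A * (1 + ‖x - θ‖) ^ q := (abs_nonneg _).trans (hA x)
  have hγG := (gaussDensity_pos hγ (x - θ')).le
  have hG2 : 0 ≤ γ⁻¹ * (2 ^ ((d : ℝ) / 2) * rexp (2 * γ)⁻¹ * gaussDensity d (2 * γ) (x - θ)) :=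
    mul_nonneg (by positivity) (hγG.trans hG)
  rw [norm_smul, norm_shiftDerivGaussDensity hγ, Real.norm_eq_abs,
    Real.rpow_add_one (by positivity : 1 + ‖x - θ‖ ≠ 0)]
  calc |h x| * (γ⁻¹ * gaussDensity d γ (x - θ') * ‖x - θ'‖)
      ≤ A * (1 + ‖x - θ‖) ^ q * (γ⁻¹ * (2 ^ ((d : ℝ) / 2) * rexp (2 * γ)⁻¹ *
          gaussDensity d (2 * γ) (x - θ)) * (1 + ‖x - θ‖)) := by
        gcongr
        exact hA x
    _ = _ := by ring

lemma integrable_smul_shiftDerivGaussDensity_sub (hγ : 0 < γ) {h : E → ℝ} {A q : ℝ} {θ : E}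
    (hm : AEStronglyMeasurable h) (hq : 0 ≤ q) (hA : ∀ x, |h x| ≤ A * (1 + ‖x - θ‖) ^ q) :
    Integrable (fun x => h x • shiftDerivGaussDensity d γ (x - θ)) :=
  (((integrable_one_add_norm_rpow_mul_gaussDensity (by positivity) (by positivity)).comp_sub_right
      θ).const_mul _).mono' (hm.smul (by fun_prop))
    (.of_forall (norm_smul_shiftDerivGaussDensity_sub_le hγ hA (Metric.mem_closedBall_self
      zero_le_one)))

theorem hasFDerivAt_integral_mul_gaussDensity_sub (hγ : 0 < γ) {h : E → ℝ} {A q : ℝ} {θ : E}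
    (hm : AEStronglyMeasurable h) (hq : 0 ≤ q) (hA : ∀ x, |h x| ≤ A * (1 + ‖x - θ‖) ^ q) :
    HasFDerivAt (fun θ' => ∫ x, h x * gaussDensity d γ (x - θ'))
      (∫ x, h x • shiftDerivGaussDensity d γ (x - θ)) θ := by
  have hint : Integrable (fun x => h x * gaussDensity d γ (x - θ)) := by
    refine (((integrable_one_add_norm_rpow_mul_gaussDensity hγ hq).comp_sub_right θ).const_mul
      A).mono' (hm.mul (by fun_prop)) (.of_forall fun x => ?_)
    rw [norm_mul, Real.norm_eq_abs, Real.norm_of_nonneg (gaussDensity_pos hγ _).le, ← mul_assoc]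
    exact mul_le_mul_of_nonneg_right (hA x) (gaussDensity_pos hγ _).le
  refine hasFDerivAt_integral_of_dominated_of_fderiv_le (Metric.closedBall_mem_nhds θ one_pos)
    (.of_forall fun θ' => hm.mul (by fun_prop)) hint (hm.smul (by fun_prop))
    (.of_forall fun x θ' hθ' => norm_smul_shiftDerivGaussDensity_sub_le hγ hA hθ' x)
    (((integrable_one_add_norm_rpow_mul_gaussDensity (by positivity) (by positivity)).comp_sub_right
      θ).const_mul _)
    (.of_forall fun x θ' _ => (hasFDerivAt_gaussDensity_sub x θ').const_mul (h x))

lemma integral_shiftDerivGaussDensity_sub (hγ : 0 < γ) (θ : E) :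
    ∫ x, shiftDerivGaussDensity d γ (x - θ) = 0 := by
  have h := hasFDerivAt_integral_mul_gaussDensity_sub hγ (h := fun _ => 1) (A := 1) (q := 0)
    (θ := θ) aestronglyMeasurable_const le_rfl (fun x => by simp)
  simp only [one_mul, one_smul] at h
  rw [funext fun θ' => integral_sub_right_eq_self (gaussDensity d γ) θ'] at h
  exact h.unique (hasFDerivAt_const _ _)

end Smoothing

section Holder

variable {d : ℕ} {U : Type*} {γ : ℝ}

local notation "E" => EuclideanSpace ℝ (Fin d)

theorem fderiv_gaussSmooth (ℓ : E → U → ℝ) (u : U) (hγ : 0 < γ) {A q : ℝ} {θ : E}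
    (hm : AEStronglyMeasurable (ℓ · u)) (hq : 0 ≤ q) (hA : ∀ x, |ℓ x u| ≤ A * (1 + ‖x - θ‖) ^ q) :
    fderiv ℝ (fun θ' => gaussSmooth ℓ γ θ' u) θ
      = ∫ x, (ℓ x u - ℓ θ u) • shiftDerivGaussDensity d γ (x - θ) := by
  have hD := integrable_smul_shiftDerivGaussDensity_sub hγ (h := fun _ => 1) (A := 1) (q := 0)
    (θ := θ) aestronglyMeasurable_const le_rfl (fun x => by simp)
  simp only [one_smul] at hD
  simp_rw [sub_smul (M := E →L[ℝ] ℝ)]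
  rw [integral_sub (integrable_smul_shiftDerivGaussDensity_sub hγ hm hq hA) (hD.smul (ℓ θ u) :
    Integrable fun x => ℓ θ u • shiftDerivGaussDensity d γ (x - θ)),
    integral_smul, integral_shiftDerivGaussDensity_sub hγ, smul_zero, sub_zero]
  exact (hasFDerivAt_integral_mul_gaussDensity_sub hγ hm hq hA).fderiv

/-- Integrability against the positive continuous density would force measurability, so here
`gaussSmooth` is the integral of a non-integrable function, which is `0` by convention. -/
lemma gaussSmooth_eq_zero_of_not_aestronglyMeasurable (ℓ : E → U → ℝ) (u : U) (hγ : 0 < γ)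
    (hm : ¬ AEStronglyMeasurable (ℓ · u)) (θ : E) : gaussSmooth ℓ γ θ u = 0 := by
  refine integral_undef fun hint => hm ?_
  have hpos : ∀ x : E, gaussDensity d γ (x - θ) ≠ 0 := fun x => (gaussDensity_pos hγ _).ne'
  refine (hint.aestronglyMeasurable.mul (Continuous.aestronglyMeasurable (f := fun x : E =>
    (gaussDensity d γ (x - θ))⁻¹) (by fun_prop (disch := exact hpos _)))).congr
    (.of_forall fun x => ?_)
  simp [mul_assoc, mul_inv_cancel₀ (hpos x)]

lemma Real.rpow_add_rpow_le_two_mul_one_add_rpow {t α β : ℝ} (ht : 0 ≤ t) (hα : 0 ≤ α)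
    (hαβ : α ≤ β) : t ^ α + t ^ β ≤ 2 * (1 + t) ^ β := by
  have h1 : 1 ≤ 1 + t := by linarith
  have hα' : t ^ α ≤ (1 + t) ^ β :=
    (Real.rpow_le_rpow ht (by linarith) hα).trans (Real.rpow_le_rpow_of_exponent_le h1 hαβ)
  have hβ' : t ^ β ≤ (1 + t) ^ β := Real.rpow_le_rpow ht (by linarith) (hα.trans hαβ)
  linarith

lemma abs_le_mul_one_add_norm_rpow_of_holder {h : E → ℝ} {θ : E} {J α β : ℝ} (hJ : 0 ≤ J)
    (hα : 0 ≤ α) (hαβ : α ≤ β) (hH : ∀ x, |h x - h θ| ≤ J * (‖x - θ‖ ^ α + ‖x - θ‖ ^ β)) (x : E) :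
    |h x| ≤ (|h θ| + 2 * J) * (1 + ‖x - θ‖) ^ β := by
  have h1 : 1 ≤ (1 + ‖x - θ‖) ^ β :=
    Real.one_le_rpow (by linarith [norm_nonneg (x - θ)]) (hα.trans hαβ)
  have h2 := mul_le_mul_of_nonneg_left
    (Real.rpow_add_rpow_le_two_mul_one_add_rpow (norm_nonneg (x - θ)) hα hαβ) hJ
  calc |h x| ≤ |h θ| + |h x - h θ| := by
        simpa using abs_add_le (h θ) (h x - h θ)
    _ ≤ |h θ| * (1 + ‖x - θ‖) ^ β + J * (2 * (1 + ‖x - θ‖) ^ β) := by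
        gcongr
        · exact le_mul_of_one_le_right (abs_nonneg _) h1
        · exact (hH x).trans h2
    _ = _ := by ring

lemma norm_integral_smul_shiftDerivGaussDensity_sub_le (hγ : 0 < γ) {h : E → ℝ} {θ : E}
    {J α β : ℝ} (hα : 0 ≤ α) (hβ : 0 ≤ β)
    (hH : ∀ x, |h x - h θ| ≤ J * (‖x - θ‖ ^ α + ‖x - θ‖ ^ β)) :
    ‖∫ x, (h x - h θ) • shiftDerivGaussDensity d γ (x - θ)‖ ≤ J * γ⁻¹ *
      ((∫ z : E, ‖z‖ ^ (α + 1) * gaussDensity d γ z) +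
        ∫ z : E, ‖z‖ ^ (β + 1) * gaussDensity d γ z) := by
  have hα' := integrable_norm_rpow_mul_gaussDensity (d := d) hγ (p := α + 1) (by linarith)
  have hβ' := integrable_norm_rpow_mul_gaussDensity (d := d) hγ (p := β + 1) (by linarith)
  have hle : ∀ x, ‖(h x - h θ) • shiftDerivGaussDensity d γ (x - θ)‖ ≤ J * γ⁻¹ *
      (‖x - θ‖ ^ (α + 1) * gaussDensity d γ (x - θ) +
        ‖x - θ‖ ^ (β + 1) * gaussDensity d γ (x - θ)) := fun x => by
    have hG := (gaussDensity_pos hγ (x - θ)).le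
    rw [norm_smul, norm_shiftDerivGaussDensity hγ, Real.norm_eq_abs,
      Real.rpow_add_one' (norm_nonneg _) (by linarith),
      Real.rpow_add_one' (norm_nonneg _) (by linarith)]
    calc |h x - h θ| * (γ⁻¹ * gaussDensity d γ (x - θ) * ‖x - θ‖)
        ≤ J * (‖x - θ‖ ^ α + ‖x - θ‖ ^ β) * (γ⁻¹ * gaussDensity d γ (x - θ) * ‖x - θ‖) := by
          gcongr
          exact hH x
      _ = _ := by ring
  calc _ ≤ ∫ x, J * γ⁻¹ * (‖x - θ‖ ^ (α + 1) * gaussDensity d γ (x - θ) +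
        ‖x - θ‖ ^ (β + 1) * gaussDensity d γ (x - θ)) :=
        norm_integral_le_of_norm_le (((hα'.add hβ').const_mul _).comp_sub_right θ) (.of_forall hle)
    _ = _ := by
        rw [integral_sub_right_eq_self (fun z => J * γ⁻¹ * (‖z‖ ^ (α + 1) * gaussDensity d γ z +
          ‖z‖ ^ (β + 1) * gaussDensity d γ z)) θ, integral_const_mul, integral_add hα' hβ']

lemma Real.inv_mul_rpow_le_rpow_of_le_one {γ p q : ℝ} (hγ : 0 < γ) (hγ1 : γ ≤ 1) (hpq : p ≤ q) :
    γ⁻¹ * γ ^ ((q + 1) / 2) ≤ γ ^ ((p - 1) / 2) := by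
  rw [← Real.rpow_neg_one, ← Real.rpow_add hγ]
  exact Real.rpow_le_rpow_of_exponent_ge hγ hγ1 (by linarith)

end Holder

theorem stmt11 {d : ℕ} {U : Type*} (ℓ : EuclideanSpace ℝ (Fin d) → U → ℝ)
    (J : U → ℝ) (hJ : ∀ u, 0 ≤ J u)
    (α β : ℝ) (hα0 : 0 ≤ α) (hα1 : α ≤ 1) (hβ : 1 ≤ β)
    (hH : ∀ (θ θ' : EuclideanSpace ℝ (Fin d)) (u : U),
      |ℓ θ u - ℓ θ' u| ≤ J u * (‖θ - θ'‖ ^ α + ‖θ - θ'‖ ^ β)) :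
    ∃ C : ℝ, ∀ (θ : EuclideanSpace ℝ (Fin d)) (u : U) (γ : ℝ), 0 < γ → γ ≤ 1 →
      ‖fderiv ℝ (fun θ' => gaussSmooth ℓ γ θ' u) θ‖ ≤ C * J u * γ ^ ((α - 1) / 2) := by
  set M : ℝ → ℝ := fun p => ∫ z : EuclideanSpace ℝ (Fin d), ‖z‖ ^ p * gaussDensity d 1 z
  have hM : ∀ p, 0 ≤ M p := fun p => integral_nonneg fun z =>
    mul_nonneg (by positivity) (gaussDensity_pos one_pos z).le
  refine ⟨M (α + 1) + M (β + 1), fun θ u γ hγ hγ1 => ?_⟩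
  have hαβ : α ≤ β := hα1.trans hβ
  by_cases hm : AEStronglyMeasurable (ℓ · u)
  · rw [fderiv_gaussSmooth ℓ u hγ hm (hα0.trans hαβ)
      (abs_le_mul_one_add_norm_rpow_of_holder (hJ u) hα0 hαβ (hH · θ u))]
    calc _ ≤ J u * γ⁻¹ * (γ ^ ((α + 1) / 2) * M (α + 1) + γ ^ ((β + 1) / 2) * M (β + 1)) := by
          simpa only [integral_norm_rpow_mul_gaussDensity hγ, add_div] using
            norm_integral_smul_shiftDerivGaussDensity_sub_le hγ hα0 (hα0.trans hαβ) (hH · θ u)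
      _ = J u * ((γ⁻¹ * γ ^ ((α + 1) / 2)) * M (α + 1) +
            (γ⁻¹ * γ ^ ((β + 1) / 2)) * M (β + 1)) := by
          ring
      _ ≤ J u * (γ ^ ((α - 1) / 2) * M (α + 1) + γ ^ ((α - 1) / 2) * M (β + 1)) := by
          gcongr
          · exact hJ u
          · exact hM _
          · exact Real.inv_mul_rpow_le_rpow_of_le_one hγ hγ1 le_rfl
          · exact hM _
          · exact Real.inv_mul_rpow_le_rpow_of_le_one hγ hγ1 hαβ
      _ = _ := by ring
  · rw [funext (gaussSmooth_eq_zero_of_not_aestronglyMeasurable ℓ u hγ hm), fderiv_const_apply,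
      norm_zero]
    exact mul_nonneg (mul_nonneg (add_nonneg (hM _) (hM _)) (hJ u)) (by positivity)
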